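/- arXiv:1704.05734 — 4 statements merged into one kernel-verified Lean document; each statement's English description precedes it below -/
import Mathlib

section
/- Let {B_{b|i}}_{i=1}^n be qubit POVMs (2×2 positive matrices with continuous or discrete outcomes), and write p_i(b) = ⟨0|B_{b|i}|0⟩, M_i(b) = B_{b|i}/p_i(b), r_i(b) = det M_i(b). If Σ_{i=1}^n r_i(b_i) ≥ n - 1 for all outcome tuples (b_1,...,b_n), then the POVMs {B_{b|i}} are jointly measurable: there exists a joint POVM G_{b_1,...,b_n} whose i-th margin equals B_{b|i} for every i. -/
open Matrix BigOperators ComplexOrder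

noncomputable section

/-- The determinant of the normalized 2×2 POVM element M_i(b) = B_{b|i} / ⟨0|B_{b|i}|0⟩. -/
def rdet (B : Matrix (Fin 2) (Fin 2) ℂ) : ℂ := (((B 0 0)⁻¹) • B).det

/-!
Write each effect as `B = p • [[1, f̄], [f, |f|² + r]]` with `p = B 0 0`, `f = B 1 0 / p`
and `r = rdet B`. The normalisation `∑ b, B i b = 1` says that under the probability weights
`p i` the functions `f i`, `f̄ i` and `|f i|² + r i - 1` have mean zero. The joint observable
has the product weights `∏ i, p i (g i)`, `F = ∑ i, f i (g i)` and
`s = ∑ i, r i (g i) - (n - 1)`, so it is positive as soon as `s ≥ 0`. Its `i`-th margin is a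
conditional expectation for a product measure, under which every product of mean-zero factors
in coordinates other than `i` averages to zero; expanding
`|F|² + s = 1 + ∑ k, (|f k|² + r k - 1) + ∑ k ≠ l, f k f̄ l` leaves `|f i|² + r i`.
-/

open Finset

section
variable {ι κ R : Type*} [Fintype ι] [DecidableEq ι] [Fintype κ] [DecidableEq κ]
  [CommSemiring R]

theorem sum_filter_apply_eq_prod (Q : ι → κ → R) (i : ι) (b : κ) :
    ∑ g : ι → κ with g i = b, ∏ j, Q j (g j) =
      Q i b * ∏ j ∈ univ.erase i, ∑ c, Q j c := by
  have hfiber : ({g : ι → κ | g i = b} : Finset (ι → κ)) =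
      Fintype.piFinset (Function.update (fun _ : ι => (univ : Finset κ)) i {b}) := by
    simpa using (Fintype.piFinset_update_singleton_eq_filter_piFinset_eq
      (fun _ : ι => (univ : Finset κ)) i (mem_univ b)).symm
  rw [hfiber, ← prod_univ_sum, ← mul_prod_erase _ _ (mem_univ i)]
  congr 1
  · simp
  · exact prod_congr rfl fun j hj => by
      rw [Function.update_of_ne (ne_of_mem_erase hj)]

theorem sum_filter_prod (p : ι → κ → R) (hp : ∀ j, ∑ c, p j c = 1) (i : ι) (b : κ) :
    ∑ g : ι → κ with g i = b, ∏ j, p j (g j) = p i b := by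
  rw [sum_filter_apply_eq_prod, prod_eq_one fun j _ => hp j, mul_one]

theorem sum_filter_prod_mul_prod (p φ : ι → κ → R) {S : Finset ι}
    (hp : ∀ j, ∑ c, p j c = 1) (hφ : ∀ j ∈ S, ∑ c, p j c * φ j c = 0) (i : ι) (b : κ) :
    ∑ g : ι → κ with g i = b, (∏ j, p j (g j)) * ∏ k ∈ S, φ k (g k) =
      if S ⊆ {i} then p i b * ∏ k ∈ S, φ k b else 0 := by
  have hQ : ∀ g : ι → κ, (∏ j, p j (g j)) * ∏ k ∈ S, φ k (g k) =
      ∏ j, p j (g j) * if j ∈ S then φ j (g j) else 1 := fun g => by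
    rw [prod_mul_distrib, prod_ite_mem, univ_inter]
  rw [sum_congr rfl fun g _ => hQ g,
    sum_filter_apply_eq_prod (fun j c => p j c * if j ∈ S then φ j c else 1)]
  by_cases hS : S ⊆ {i}
  · rw [if_pos hS]
    have hrest : ∀ j ∈ univ.erase i, ∑ c, p j c * (if j ∈ S then φ j c else 1) = 1 := by
      intro j hj
      have hjS : j ∉ S := fun hjS => ne_of_mem_erase hj (mem_singleton.1 (hS hjS))
      simp [hjS, hp]
    rw [prod_eq_one hrest, mul_one]
    rcases subset_singleton_iff.1 hS with rfl | rfl <;> simp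
  · rw [if_neg hS]
    obtain ⟨k, hkS, hki⟩ : ∃ k ∈ S, k ≠ i := by
      simpa [subset_iff] using hS
    rw [prod_eq_zero (mem_erase.2 ⟨hki, mem_univ k⟩) (by simpa [hkS] using hφ k hkS),
      mul_zero]

theorem sum_filter_prod_mul_sum (p φ : ι → κ → R) (hp : ∀ j, ∑ c, p j c = 1)
    (hφ : ∀ j, ∑ c, p j c * φ j c = 0) (i : ι) (b : κ) :
    ∑ g : ι → κ with g i = b, (∏ j, p j (g j)) * ∑ k, φ k (g k) = p i b * φ i b := by
  simp_rw [mul_sum]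
  rw [sum_comm]
  have hk : ∀ k, ∑ g : ι → κ with g i = b, (∏ j, p j (g j)) * φ k (g k) =
      if k = i then p i b * φ k b else 0 := fun k => by
    simpa [singleton_subset_singleton] using
      sum_filter_prod_mul_prod p φ (S := {k}) hp (fun j _ => hφ j) i b
  simp [hk]

theorem sum_filter_prod_mul_offDiag (p φ ψ : ι → κ → R) (hp : ∀ j, ∑ c, p j c = 1)
    (hφ : ∀ j, ∑ c, p j c * φ j c = 0) (hψ : ∀ j, ∑ c, p j c * ψ j c = 0) (i : ι) (b : κ) :
    ∑ g : ι → κ with g i = b,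
      (∏ j, p j (g j)) * ∑ k, ∑ l ∈ univ.erase k, φ k (g k) * ψ l (g l) = 0 := by
  simp_rw [mul_sum]
  rw [sum_comm]
  refine sum_eq_zero fun k _ => ?_
  rw [sum_comm]
  refine sum_eq_zero fun l hl => ?_
  have hlk : l ≠ k := ne_of_mem_erase hl
  set χ : ι → κ → R := fun j => if j = k then φ j else ψ j
  have hχ : ∀ g : ι → κ, φ k (g k) * ψ l (g l) = ∏ j ∈ {k, l}, χ j (g j) := fun g => by
    simp [χ, prod_pair hlk.symm, hlk]
  have hnot : ¬({k, l} : Finset ι) ⊆ {i} := fun h =>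
    hlk ((mem_singleton.1 (h (mem_insert_of_mem (mem_singleton_self l)))).trans
      (mem_singleton.1 (h (mem_insert_self k {l}))).symm)
  simp_rw [hχ]
  have hχ0 : ∀ j ∈ ({k, l} : Finset ι), ∑ c, p j c * χ j c = 0 := fun j _ => by
    by_cases hj : j = k <;> simp [χ, hj, hφ, hψ]
  rw [sum_filter_prod_mul_prod p χ hp hχ0, if_neg hnot]

end

open ComplexConjugate

def qubitMatrix (F s : ℂ) : Matrix (Fin 2) (Fin 2) ℂ := !![1, conj F; F, F * conj F + s]

theorem qubitMatrix_posSemidef (F : ℂ) {s : ℂ} (hs : 0 ≤ s) :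
    (qubitMatrix F s).PosSemidef := by
  have : qubitMatrix F s = vecMulVec ![1, F] (star ![1, F]) + diagonal ![0, s] := by
    ext a c; fin_cases a <;> fin_cases c <;> simp [qubitMatrix, vecMulVec]
  rw [this]
  exact (posSemidef_vecMulVec_self_star _).add
    (posSemidef_diagonal_iff.2 fun a => by fin_cases a <;> simp [hs])

theorem rdet_im {A : Matrix (Fin 2) (Fin 2) ℂ} (hA : A.IsHermitian) : (rdet A).im = 0 := by
  have h00 : conj (A 0 0) = A 0 0 := hA.apply 0 0
  have hH : ((A 0 0)⁻¹ • A).IsHermitian := by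
    rw [IsHermitian, conjTranspose_smul, hA.eq, star_inv₀]
    exact congrArg (· • A) (congrArg _ h00)
  rw [← Complex.conj_eq_iff_im, rdet, ← Complex.star_def, ← det_conjTranspose, hH.eq]

theorem eq_smul_qubitMatrix {A : Matrix (Fin 2) (Fin 2) ℂ} (hA : A.IsHermitian)
    (h0 : A 0 0 ≠ 0) :
    A = A 0 0 • qubitMatrix (A 1 0 / A 0 0) (rdet A) := by
  have h01 : conj (A 1 0) = A 0 1 := hA.apply 0 1
  have h00 : conj (A 0 0) = A 0 0 := hA.apply 0 0
  ext a c
  fin_cases a <;> fin_cases c <;> simp [qubitMatrix, rdet, det_fin_two, h01, h00]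
  all_goals field_simp
  ring

section JointQubit
variable {ι κ : Type*} [Fintype ι]

def jointQubit (p f r : ι → κ → ℂ) (g : ι → κ) : Matrix (Fin 2) (Fin 2) ℂ :=
  (∏ j, p j (g j)) • qubitMatrix (∑ k, f k (g k)) (∑ k, r k (g k) - (Fintype.card ι - 1))

variable {p f r : ι → κ → ℂ}

theorem jointQubit_posSemidef (hp : ∀ j c, 0 ≤ p j c) (g : ι → κ)
    (hr : (Fintype.card ι : ℂ) - 1 ≤ ∑ k, r k (g k)) : (jointQubit p f r g).PosSemidef :=
  (qubitMatrix_posSemidef _ (sub_nonneg.2 hr)).smul (prod_nonneg fun j _ => hp j (g j))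

variable [DecidableEq ι]

theorem sum_mul_conj_sum (x : ι → ℂ) :
    (∑ k, x k) * conj (∑ k, x k) =
      ∑ k, x k * conj (x k) + ∑ k, ∑ l ∈ univ.erase k, x k * conj (x l) := by
  rw [map_sum, sum_mul_sum, ← sum_add_distrib]
  exact sum_congr rfl fun k _ => (add_sum_erase _ _ (mem_univ k)).symm

variable [Fintype κ] [DecidableEq κ]

theorem sum_filter_jointQubit (h : ∀ j, ∑ c, p j c • qubitMatrix (f j c) (r j c) = 1)
    (i : ι) (b : κ) :
    ∑ g : ι → κ with g i = b, jointQubit p f r g = p i b • qubitMatrix (f i b) (r i b) := by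
  have hentry : ∀ a c j,
      ∑ x, p j x * qubitMatrix (f j x) (r j x) a c = (1 : Matrix (Fin 2) (Fin 2) ℂ) a c :=
    fun a c j => by rw [← h j, Matrix.sum_apply]; rfl
  have hp : ∀ j, ∑ c, p j c = 1 := by simpa [qubitMatrix] using hentry 0 0
  have hf : ∀ j, ∑ c, p j c * f j c = 0 := by simpa [qubitMatrix] using hentry 1 0
  have hf' : ∀ j, ∑ c, p j c * conj (f j c) = 0 := by simpa [qubitMatrix] using hentry 0 1
  have ht : ∀ j, ∑ c, p j c * (f j c * conj (f j c) + r j c - 1) = 0 := fun j => by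
    simpa [qubitMatrix, mul_sub, sum_sub_distrib, hp, sub_eq_zero] using hentry 1 1 j
  ext a c
  rw [Matrix.sum_apply]
  fin_cases a <;> fin_cases c <;> simp [jointQubit, qubitMatrix]
  · exact sum_filter_prod p hp i b
  · simpa using sum_filter_prod_mul_sum p (fun j c => conj (f j c)) hp hf' i b
  · exact sum_filter_prod_mul_sum p f hp hf i b
  · have hexpand : ∀ g : ι → κ,
        (∑ k, f k (g k)) * ∑ k, conj (f k (g k)) +
            (∑ k, r k (g k) - (Fintype.card ι - 1)) =
          1 + ∑ k, (f k (g k) * conj (f k (g k)) + r k (g k) - 1) +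
            ∑ k, ∑ l ∈ univ.erase k, f k (g k) * conj (f l (g l)) := fun g => by
      rw [← map_sum, sum_mul_conj_sum, sum_sub_distrib, sum_add_distrib]
      simp only [sum_const, card_univ, nsmul_eq_mul, mul_one]
      ring
    simp_rw [hexpand, mul_add, sum_add_distrib, mul_one]
    rw [sum_filter_prod p hp, sum_filter_prod_mul_sum p _ hp ht,
      sum_filter_prod_mul_offDiag p f (fun j c => conj (f j c)) hp hf hf']
    ring

theorem sum_jointQubit (h : ∀ j, ∑ c, p j c • qubitMatrix (f j c) (r j c) = 1) :
    ∑ g, jointQubit p f r g = 1 := by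
  rcases isEmpty_or_nonempty ι with hι | ⟨⟨i⟩⟩
  · ext a c
    fin_cases a <;> fin_cases c <;> simp [jointQubit, qubitMatrix]
  · rw [← sum_fiberwise univ (fun g => g i), ← h i]
    exact sum_congr rfl fun b _ => sum_filter_jointQubit h i b

end JointQubit

/-- If qubit POVMs {B_{·|i}}_{i=1}^n (finite outcome sets) satisfy
Σ_i det(B_{b_i|i}/⟨0|B_{b_i|i}|0⟩) ≥ n - 1 for every outcome tuple, then they are jointly
measurable: there is a joint POVM G on the product outcome space whose i-th margin is B_{·|i}. -/
theorem stmt3 (n m : ℕ) (B : Fin n → Fin m → Matrix (Fin 2) (Fin 2) ℂ)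
    (hpsd : ∀ i b, (B i b).PosSemidef)
    (hnorm : ∀ i, ∑ b, B i b = 1)
    (hp : ∀ i b, 0 < ((B i b) 0 0).re)
    (hcrit : ∀ g : Fin n → Fin m, ((n : ℝ) - 1) ≤ (∑ i, rdet (B i (g i))).re) :
    ∃ G : (Fin n → Fin m) → Matrix (Fin 2) (Fin 2) ℂ,
      (∀ g, (G g).PosSemidef) ∧ (∑ g : Fin n → Fin m, G g = 1) ∧
      (∀ i b, B i b = ∑ g : Fin n → Fin m, if g i = b then G g else 0) := by
  have hB : ∀ i b,
      B i b = (B i b) 0 0 • qubitMatrix ((B i b) 1 0 / (B i b) 0 0) (rdet (B i b)) :=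
    fun i b => eq_smul_qubitMatrix (hpsd i b).isHermitian fun h0 => by simpa [h0] using hp i b
  have hnorm' : ∀ i,
      ∑ b, (B i b) 0 0 • qubitMatrix ((B i b) 1 0 / (B i b) 0 0) (rdet (B i b)) = 1 :=
    fun i => by simp_rw [← hB]; exact hnorm i
  refine ⟨jointQubit (fun i b => (B i b) 0 0) (fun i b => (B i b) 1 0 / (B i b) 0 0)
    (fun i b => rdet (B i b)), fun g => ?_, sum_jointQubit hnorm', fun i b => ?_⟩
  · refine jointQubit_posSemidef (fun i b => (hpsd i b).diag_nonneg) g ?_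
    rw [Complex.le_def]
    simpa [Complex.im_sum, rdet_im (hpsd _ _).isHermitian] using hcrit g
  · rw [← sum_filter, sum_filter_jointQubit hnorm', ← hB]
end
end

section
/- Two noisy single-mode quadratures with Gaussian noise parameters ξ, ξ' > 0, corresponding to the canonical pair (Q, P) with [Q,P] = i, are jointly measurable if and only if ξ ξ' ≥ 1/2. In the finite-dimensional surrogate formulation: binary qubit observables with elements (1/2)(I ± n·σ) and (1/2)(I ± m·σ) (Bloch vectors n, m) are jointly measurable if and only if |n + m| + |n - m| ≤ 2. -/
open Matrix BigOperators ComplexOrder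

noncomputable section

def pauliX : Matrix (Fin 2) (Fin 2) ℂ := !![0, 1; 1, 0]
def pauliY : Matrix (Fin 2) (Fin 2) ℂ := !![0, -Complex.I; Complex.I, 0]
def pauliZ : Matrix (Fin 2) (Fin 2) ℂ := !![1, 0; 0, -1]

/-- n·σ for a Bloch vector n ∈ ℝ³. -/
def blochOp (v : Fin 3 → ℝ) : Matrix (Fin 2) (Fin 2) ℂ :=
  (v 0 : ℂ) • pauliX + (v 1 : ℂ) • pauliY + (v 2 : ℂ) • pauliZ

/-- The unbiased binary qubit observable with effects (I ± n·σ)/2. -/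
def binObs (v : Fin 3 → ℝ) (ε : Bool) : Matrix (Fin 2) (Fin 2) ℂ :=
  (2 : ℂ)⁻¹ • ((1 : Matrix (Fin 2) (Fin 2) ℂ) + (if ε then 1 else -1 : ℂ) • blochOp v)


/-!
A Hermitian 2×2 matrix is `a I + v·σ`, and since `(v·σ)² = |v|² I` it is positive semidefinite
iff `|v| ≤ a` (its eigenvalues are `a ± |v|`). Writing the effects of a joint observable as
`G εδ = a_εδ I + v_εδ·σ`, the margin conditions force `n + m = 2 (v₊₊ - v₋₋)`,
`n - m = 2 (v₊₋ - v₋₊)` and `∑ a_εδ = 1`, so the triangle inequality gives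
`|n + m| + |n - m| ≤ 2 ∑ |v_εδ| ≤ 2`. Conversely, Busch's joint observable
`G εδ = ¼ ((1 + εδ (|n + m| - 1)) I + (εn + δm)·σ)` has the right margins, and it is positive
exactly when `|n + m| + |n - m| ≤ 2`.
-/

lemma sqrt_sum_sq_eq_norm_toLp {ι : Type*} [Fintype ι] (v : ι → ℝ) :
    √(∑ i, v i ^ 2) = ‖WithLp.toLp 2 v‖ := by
  simp [EuclideanSpace.norm_eq]

lemma norm_toLp_le_iff {ι : Type*} [Fintype ι] (v : ι → ℝ) (a : ℝ) :
    ‖WithLp.toLp 2 v‖ ≤ a ↔ 0 ≤ a ∧ ∑ i, v i ^ 2 ≤ a ^ 2 := by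
  rw [← EuclideanSpace.real_norm_sq_eq (WithLp.toLp 2 v)]
  exact ⟨fun h => ⟨(norm_nonneg _).trans h, pow_le_pow_left₀ (norm_nonneg _) h 2⟩,
    fun ⟨ha, h⟩ => (sq_le_sq₀ (norm_nonneg _) ha).mp h⟩

lemma blochOp_eq (v : Fin 3 → ℝ) :
    blochOp v = !![(v 2 : ℂ), v 0 - v 1 * Complex.I; v 0 + v 1 * Complex.I, -(v 2 : ℂ)] := by
  ext i j
  fin_cases i <;> fin_cases j <;> simp [blochOp, pauliX, pauliY, pauliZ, sub_eq_add_neg]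

lemma blochOp_add (v w : Fin 3 → ℝ) : blochOp (v + w) = blochOp v + blochOp w := by
  simp only [blochOp, Pi.add_apply, Complex.ofReal_add, add_smul]
  abel

lemma blochOp_smul (c : ℝ) (v : Fin 3 → ℝ) : blochOp (c • v) = (c : ℂ) • blochOp v := by
  simp only [blochOp, Pi.smul_apply, smul_eq_mul, Complex.ofReal_mul, smul_add, smul_smul]

lemma blochOp_zero : blochOp 0 = 0 := by
  simpa using blochOp_smul 0 0

lemma isHermitian_blochOp (v : Fin 3 → ℝ) : (blochOp v).IsHermitian := by
  rw [blochOp_eq]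
  ext i j
  fin_cases i <;> fin_cases j <;> simp [Complex.ext_iff]

lemma blochOp_mul_self (v : Fin 3 → ℝ) :
    blochOp v * blochOp v = ((∑ i, v i ^ 2 : ℝ) : ℂ) • 1 := by
  rw [blochOp_eq]
  ext i j
  fin_cases i <;> fin_cases j <;> simp [Fin.sum_univ_three, Matrix.mul_apply] <;> ring_nf <;>
    simp only [Complex.I_sq] <;> ring

section SmulOneAddBlochOp

variable (a : ℝ) (v : Fin 3 → ℝ)

lemma isHermitian_smul_one_add_blochOp : ((a : ℂ) • 1 + blochOp v).IsHermitian :=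
  (isHermitian_one.smul (Complex.conj_ofReal a)).add (isHermitian_blochOp v)

lemma trace_smul_one_add_blochOp : ((a : ℂ) • 1 + blochOp v).trace = ((2 * a : ℝ) : ℂ) := by
  rw [blochOp_eq]
  simp [Matrix.trace_fin_two]
  ring

lemma det_smul_one_add_blochOp :
    ((a : ℂ) • 1 + blochOp v).det = ((a ^ 2 - ∑ i, v i ^ 2 : ℝ) : ℂ) := by
  rw [blochOp_eq, Matrix.det_fin_two]
  simp [Fin.sum_univ_three]
  linear_combination (v 1 : ℂ) ^ 2 * Complex.I_sq

lemma smul_one_add_blochOp_mul_self :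
    ((a : ℂ) • 1 + blochOp v) * ((a : ℂ) • 1 + blochOp v) =
      ((a ^ 2 + ∑ i, v i ^ 2 : ℝ) : ℂ) • 1 + ((2 * a : ℝ) : ℂ) • blochOp v := by
  rw [add_mul, mul_add, mul_add, blochOp_mul_self]
  simp only [smul_mul_assoc, mul_smul_comm, one_mul, mul_one, smul_smul]
  push_cast
  module

lemma smul_one_add_blochOp_add (b : ℝ) (w : Fin 3 → ℝ) :
    ((a : ℂ) • 1 + blochOp v) + ((b : ℂ) • 1 + blochOp w) =
      ((a + b : ℝ) : ℂ) • 1 + blochOp (v + w) := by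
  rw [blochOp_add]
  push_cast
  module

theorem posSemidef_smul_one_add_blochOp_iff :
    ((a : ℂ) • 1 + blochOp v).PosSemidef ↔ ‖WithLp.toLp 2 v‖ ≤ a := by
  rw [norm_toLp_le_iff]
  constructor
  · intro h
    have htr := h.trace_nonneg
    have hdet := h.det_nonneg
    rw [trace_smul_one_add_blochOp, Complex.zero_le_real] at htr
    rw [det_smul_one_add_blochOp, Complex.zero_le_real] at hdet
    constructor <;> linarith
  · rintro ⟨ha, hv⟩
    rcases ha.eq_or_lt with rfl | ha
    · have hv0 : v = 0 := by
        funext i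
        have h := (Finset.sum_eq_zero_iff_of_nonneg fun i _ => sq_nonneg (v i)).mp
          (le_antisymm (by simpa using hv) (by positivity)) i (Finset.mem_univ i)
        simpa using h
      simpa [hv0, blochOp_zero] using PosSemidef.zero
    · set M := (a : ℂ) • 1 + blochOp v with hM
      have hherm : Mᴴ = M := (isHermitian_smul_one_add_blochOp a v).eq
      have hsq : ((2 * a : ℝ) : ℂ) • M = Mᴴ * M + ((a ^ 2 - ∑ i, v i ^ 2 : ℝ) : ℂ) • 1 := by
        rw [hherm, hM, smul_one_add_blochOp_mul_self]
        push_cast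
        module
      have h2a : ((2 * a : ℝ) : ℂ) ≠ 0 := by exact_mod_cast (by positivity : 2 * a ≠ 0)
      have hM' : M = ((2 * a : ℝ) : ℂ)⁻¹ • (Mᴴ * M + ((a ^ 2 - ∑ i, v i ^ 2 : ℝ) : ℂ) • 1) := by
        rw [← hsq, smul_smul, inv_mul_cancel₀ h2a, one_smul]
      rw [hM']
      refine ((posSemidef_conjTranspose_mul_self M).add (PosSemidef.one.smul ?_)).smul ?_
      · rw [Complex.zero_le_real]
        linarith
      · rw [← Complex.ofReal_inv, Complex.zero_le_real]
        positivity

end SmulOneAddBlochOp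

def blochScalar : Matrix (Fin 2) (Fin 2) ℂ →+ ℝ where
  toFun M := M.trace.re / 2
  map_zero' := by simp
  map_add' M N := by simp [add_div]

def blochVector : Matrix (Fin 2) (Fin 2) ℂ →+ (Fin 3 → ℝ) where
  toFun M k := (![pauliX, pauliY, pauliZ] k * M).trace.re / 2
  map_zero' := by ext; simp
  map_add' M N := by ext; simp [mul_add, add_div]

lemma blochScalar_smul_one_add_blochOp (a : ℝ) (v : Fin 3 → ℝ) :
    blochScalar ((a : ℂ) • 1 + blochOp v) = a := by
  change ((a : ℂ) • 1 + blochOp v).trace.re / 2 = a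
  rw [trace_smul_one_add_blochOp, Complex.ofReal_re]
  ring

lemma blochVector_smul_one_add_blochOp (a : ℝ) (v : Fin 3 → ℝ) :
    blochVector ((a : ℂ) • 1 + blochOp v) = v := by
  ext k
  fin_cases k <;> simp [blochVector, blochOp_eq, pauliX, pauliY, pauliZ, Matrix.trace_fin_two,
    Matrix.mul_apply]
  ring

theorem Matrix.IsHermitian.eq_smul_one_add_blochOp {M : Matrix (Fin 2) (Fin 2) ℂ}
    (hM : M.IsHermitian) : M = (blochScalar M : ℂ) • 1 + blochOp (blochVector M) := by
  have h00 : (M 0 0).im = 0 := Complex.conj_eq_iff_im.mp (hM.apply 0 0)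
  have h11 : (M 1 1).im = 0 := Complex.conj_eq_iff_im.mp (hM.apply 1 1)
  have h10 : M 1 0 = starRingEnd ℂ (M 0 1) := (hM.apply 1 0).symm
  ext i j
  fin_cases i <;> fin_cases j <;>
    simp [blochScalar, blochVector, blochOp_eq, pauliX, pauliY, pauliZ, Matrix.trace_fin_two,
      Matrix.mul_apply, Complex.ext_iff, h00, h11, h10] <;> ring

def outcomeSign (ε : Bool) : ℝ := if ε then 1 else -1

lemma outcomeSign_mul_outcomeSign (ε δ : Bool) :
    outcomeSign ε * outcomeSign δ = if ε = δ then 1 else -1 := by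
  cases ε <;> cases δ <;> simp [outcomeSign]

lemma norm_toLp_outcomeSign_smul_add (ε δ : Bool) (n m : Fin 3 → ℝ) :
    ‖WithLp.toLp 2 (outcomeSign ε • n + outcomeSign δ • m)‖ =
      if ε = δ then ‖WithLp.toLp 2 (n + m)‖ else ‖WithLp.toLp 2 (n - m)‖ := by
  cases ε <;> cases δ <;> simp [outcomeSign]
  · rw [← neg_add, norm_neg]
  · rw [neg_add_eq_sub, norm_sub_rev]
  · rw [← sub_eq_add_neg]

lemma binObs_eq (v : Fin 3 → ℝ) (ε : Bool) :
    binObs v ε = ((2⁻¹ : ℝ) : ℂ) • 1 + blochOp ((outcomeSign ε / 2) • v) := by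
  rw [binObs, blochOp_smul]
  cases ε <;> simp only [outcomeSign] <;> push_cast <;> module

lemma blochScalar_binObs (v : Fin 3 → ℝ) (ε : Bool) : blochScalar (binObs v ε) = 2⁻¹ := by
  rw [binObs_eq, blochScalar_smul_one_add_blochOp]

lemma blochVector_binObs (v : Fin 3 → ℝ) (ε : Bool) :
    blochVector (binObs v ε) = (outcomeSign ε / 2) • v := by
  rw [binObs_eq, blochVector_smul_one_add_blochOp]

theorem norm_add_add_norm_sub_le_two_of_marginals {n m : Fin 3 → ℝ}
    (G : Bool → Bool → Matrix (Fin 2) (Fin 2) ℂ) (hG : ∀ ε δ, (G ε δ).PosSemidef)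
    (hn : ∀ ε, ∑ δ, G ε δ = binObs n ε) (hm : ∀ δ, ∑ ε, G ε δ = binObs m δ) :
    ‖WithLp.toLp 2 (n + m)‖ + ‖WithLp.toLp 2 (n - m)‖ ≤ 2 := by
  set a := fun ε δ => blochScalar (G ε δ)
  set v := fun ε δ => WithLp.toLp 2 (blochVector (G ε δ))
  have hva (ε δ : Bool) : ‖v ε δ‖ ≤ a ε δ := by
    have h := hG ε δ
    rwa [(hG ε δ).isHermitian.eq_smul_one_add_blochOp, posSemidef_smul_one_add_blochOp_iff] at h
  have ha (ε : Bool) : a ε true + a ε false = 2⁻¹ := by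
    simpa [a, Fintype.sum_bool, blochScalar_binObs] using congrArg blochScalar (hn ε)
  have hvn (ε : Bool) : v ε true + v ε false = (outcomeSign ε / 2) • WithLp.toLp 2 n := by
    simpa [v, Fintype.sum_bool, blochVector_binObs] using
      congrArg (WithLp.toLp 2 ∘ blochVector) (hn ε)
  have hvm (δ : Bool) : v true δ + v false δ = (outcomeSign δ / 2) • WithLp.toLp 2 m := by
    simpa [v, Fintype.sum_bool, blochVector_binObs] using
      congrArg (WithLp.toLp 2 ∘ blochVector) (hm δ)
  have h1 := hvn true
  have h2 := hvn false
  have h3 := hvm true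
  have h4 := hvm false
  simp only [outcomeSign, if_true, if_false, Bool.false_eq_true] at h1 h2 h3 h4
  have hplus : WithLp.toLp 2 (n + m) = (2 : ℝ) • (v true true - v false false) := by
    rw [WithLp.toLp_add]
    linear_combination (norm := module) -(h1 - h2 + h3 - h4)
  have hminus : WithLp.toLp 2 (n - m) = (2 : ℝ) • (v true false - v false true) := by
    rw [WithLp.toLp_sub]
    linear_combination (norm := module) -(h1 - h2 - h3 + h4)
  calc ‖WithLp.toLp 2 (n + m)‖ + ‖WithLp.toLp 2 (n - m)‖
      ≤ 2 * (‖v true true‖ + ‖v false false‖) + 2 * (‖v true false‖ + ‖v false true‖) := by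
        rw [hplus, hminus, norm_smul, norm_smul, Real.norm_two]
        gcongr <;> exact norm_sub_le _ _
    _ ≤ 2 * (a true true + a false false) + 2 * (a true false + a false true) := by
        gcongr <;> apply hva
    _ = 2 := by linarith [ha true, ha false]

def buschJoint (n m : Fin 3 → ℝ) (ε δ : Bool) : Matrix (Fin 2) (Fin 2) ℂ :=
  (((1 + outcomeSign ε * outcomeSign δ * (‖WithLp.toLp 2 (n + m)‖ - 1)) / 4 : ℝ) : ℂ) • 1 +
    blochOp ((4 : ℝ)⁻¹ • (outcomeSign ε • n + outcomeSign δ • m))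

lemma sum_buschJoint_right (n m : Fin 3 → ℝ) (ε : Bool) :
    ∑ δ, buschJoint n m ε δ = binObs n ε := by
  rw [Fintype.sum_bool, buschJoint, buschJoint, smul_one_add_blochOp_add, binObs_eq]
  congr 3
  · simp only [outcomeSign, if_true, if_false, Bool.false_eq_true]
    ring
  · simp only [outcomeSign, if_true, if_false, Bool.false_eq_true]
    module

lemma sum_buschJoint_left (n m : Fin 3 → ℝ) (δ : Bool) :
    ∑ ε, buschJoint n m ε δ = binObs m δ := by
  rw [Fintype.sum_bool, buschJoint, buschJoint, smul_one_add_blochOp_add, binObs_eq]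
  congr 3
  · simp only [outcomeSign, if_true, if_false, Bool.false_eq_true]
    ring
  · simp only [outcomeSign, if_true, if_false, Bool.false_eq_true]
    module

lemma posSemidef_buschJoint {n m : Fin 3 → ℝ}
    (h : ‖WithLp.toLp 2 (n + m)‖ + ‖WithLp.toLp 2 (n - m)‖ ≤ 2) (ε δ : Bool) :
    (buschJoint n m ε δ).PosSemidef := by
  rw [buschJoint, posSemidef_smul_one_add_blochOp_iff, WithLp.toLp_smul, norm_smul,
    norm_toLp_outcomeSign_smul_add, outcomeSign_mul_outcomeSign]
  split_ifs <;> norm_num at h ⊢ <;> linarith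

theorem stmt14_general (n m : Fin 3 → ℝ) :
    (∃ G : Bool → Bool → Matrix (Fin 2) (Fin 2) ℂ,
        (∀ ε δ, (G ε δ).PosSemidef) ∧
        (∀ ε, ∑ δ : Bool, G ε δ = binObs n ε) ∧
        (∀ δ, ∑ ε : Bool, G ε δ = binObs m δ))
      ↔ Real.sqrt (∑ i, (n i + m i) ^ 2) + Real.sqrt (∑ i, (n i - m i) ^ 2) ≤ 2 := by
  simp only [sqrt_sum_sq_eq_norm_toLp]
  exact ⟨fun ⟨G, hG, hn, hm⟩ => norm_add_add_norm_sub_le_two_of_marginals G hG hn hm,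
    fun h => ⟨buschJoint n m, posSemidef_buschJoint h, sum_buschJoint_right n m,
      sum_buschJoint_left n m⟩⟩

/-- Busch criterion. Binary qubit observables (I ± n·σ)/2 and
(I ± m·σ)/2 with |n|, |m| ≤ 1 are jointly measurable (there is a 4-outcome POVM with
these margins) iff |n + m| + |n - m| ≤ 2. -/
theorem stmt14 (n m : Fin 3 → ℝ)
    (hn : Real.sqrt (∑ i, n i ^ 2) ≤ 1) (hm : Real.sqrt (∑ i, m i ^ 2) ≤ 1) :
    (∃ G : Bool → Bool → Matrix (Fin 2) (Fin 2) ℂ,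
        (∀ ε δ, (G ε δ).PosSemidef) ∧
        (∀ ε, ∑ δ : Bool, G ε δ = binObs n ε) ∧
        (∀ δ, ∑ ε : Bool, G ε δ = binObs m δ))
      ↔ Real.sqrt (∑ i, (n i + m i) ^ 2) + Real.sqrt (∑ i, (n i - m i) ^ 2) ≤ 2 :=
  stmt14_general n m
end
end

section
/- Let V_σ be a 2N×2N real symmetric matrix with V_σ + iΩ ≥ 0 and all symplectic eigenvalues ν_k > 1, diagonalized as V_σ = S^T D S with S symplectic and D = ⊕ ν_k I_2. Set Z = ⊕ √(ν_k²-1) σ_z. Then the 4N×4N matrix V_Ω = [[V_σ, S^T Z S],[S^T Z S, V_σ]] satisfies V_Ω + i(Ω ⊕ Ω) ≥ 0, i.e., V_Ω is a valid covariance matrix of a bipartite Gaussian state (the purification of the state with CM V_σ). -/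
open Matrix BigOperators ComplexOrder

noncomputable section

/-- The standard symplectic form Ω = ⊕_{j=1}^N [[0,1],[-1,0]] on ℝ^{2N}. -/
def symp (N : ℕ) : Matrix (Fin N × Fin 2) (Fin N × Fin 2) ℝ :=
  Matrix.of fun p q => if p.1 = q.1 then !![0, 1; -1, 0] p.2 q.2 else 0

/-- Block diagonal matrix with 2×2 blocks. -/
def bdiag (N : ℕ) (f : Fin N → Matrix (Fin 2) (Fin 2) ℝ) :
    Matrix (Fin N × Fin 2) (Fin N × Fin 2) ℝ :=
  Matrix.of fun p q => if p.1 = q.1 then f p.1 p.2 q.2 else 0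

/-- Complexification of a real matrix. -/
def cm {ι κ : Type*} (A : Matrix ι κ ℝ) : Matrix ι κ ℂ :=
  A.map fun x => (x : ℂ)

def CB (N : ℕ) (f : Fin N → Matrix (Fin 2) (Fin 2) ℂ) :
    Matrix (Fin N × Fin 2) (Fin N × Fin 2) ℂ :=
  Matrix.of fun p q => if p.1 = q.1 then f p.1 p.2 q.2 else 0

lemma cm_mul {ι κ μ : Type*} [Fintype κ] (A : Matrix ι κ ℝ) (B : Matrix κ μ ℝ) :
    cm (A * B) = cm A * cm B := by
  ext i j
  simp [cm, Matrix.mul_apply]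

lemma cm_conjTranspose {ι κ : Type*} (A : Matrix ι κ ℝ) : (cm A)ᴴ = cm Aᵀ := by
  ext i j
  simp [cm, Matrix.conjTranspose_apply, Complex.conj_ofReal]

lemma cm_fromBlocks {ι κ : Type*} (A B C D : Matrix ι κ ℝ) :
    cm (fromBlocks A B C D) = fromBlocks (cm A) (cm B) (cm C) (cm D) := by
  ext i j
  rcases i with i | i <;> rcases j with j | j <;> rfl

lemma cm_zero {ι κ : Type*} : cm (0 : Matrix ι κ ℝ) = 0 := by
  ext i j; simp [cm]

lemma cm_bdiag (N : ℕ) (f : Fin N → Matrix (Fin 2) (Fin 2) ℝ) :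
    cm (bdiag N f) = CB N (fun k => cm (f k)) := by
  ext p q
  simp only [cm, bdiag, CB, Matrix.map_apply, Matrix.of_apply]
  split <;> simp

lemma symp_eq_bdiag (N : ℕ) : symp N = bdiag N (fun _ => !![0, 1; -1, 0]) := rfl

lemma CB_mul (N : ℕ) (f g : Fin N → Matrix (Fin 2) (Fin 2) ℂ) :
    CB N f * CB N g = CB N (fun k => f k * g k) := by
  ext p q
  simp only [CB, Matrix.mul_apply, Matrix.of_apply, Fintype.sum_prod_type,
    ite_mul, mul_ite, zero_mul, mul_zero]
  rcases p with ⟨k, i⟩; rcases q with ⟨l, j⟩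
  rw [Finset.sum_eq_single k]
  · simp [Matrix.mul_apply]
  · intro m _ hm
    simp [Ne.symm hm]
  · simp

lemma CB_conjTranspose (N : ℕ) (f : Fin N → Matrix (Fin 2) (Fin 2) ℂ) :
    (CB N f)ᴴ = CB N (fun k => (f k)ᴴ) := by
  ext p q
  rcases p with ⟨k, i⟩; rcases q with ⟨l, j⟩
  simp only [CB, Matrix.conjTranspose_apply, Matrix.of_apply]
  rcases eq_or_ne k l with h | h
  · subst h; simp
  · simp [h, Ne.symm h]

lemma CB_add (N : ℕ) (f g : Fin N → Matrix (Fin 2) (Fin 2) ℂ) :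
    CB N f + CB N g = CB N (fun k => f k + g k) := by
  ext p q
  simp only [CB, Matrix.add_apply, Matrix.of_apply]
  split <;> simp

lemma CB_smul (N : ℕ) (c : ℂ) (f : Fin N → Matrix (Fin 2) (Fin 2) ℂ) :
    c • CB N f = CB N (fun k => c • f k) := by
  ext p q
  simp only [CB, Matrix.smul_apply, Matrix.of_apply]
  split <;> simp

lemma CB_congr (N : ℕ) (f g : Fin N → Matrix (Fin 2) (Fin 2) ℂ) (h : ∀ k, f k = g k) :
    CB N f = CB N g := by
  have : f = g := funext h
  rw [this]

/-- Let V_σ be real symmetric with V_σ + iΩ ≥ 0, symplectically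
diagonalized as V_σ = Sᵀ D S (SᵀΩS = Ω, D = ⊕ ν_k I₂, ν_k > 1), and let
Z = ⊕ √(ν_k²-1) σ_z. Then V_Ω = [[V_σ, SᵀZS],[SᵀZS, V_σ]] satisfies
V_Ω + i(Ω ⊕ Ω) ≥ 0, i.e. it is a valid covariance matrix of a bipartite Gaussian state. -/
theorem stmt16 (N : ℕ)
    (Vσ S : Matrix (Fin N × Fin 2) (Fin N × Fin 2) ℝ) (ν : Fin N → ℝ)
    (hsym : Vσ.IsSymm) (hν : ∀ k, 1 < ν k)
    (hpsd : (cm Vσ + Complex.I • cm (symp N)).PosSemidef)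
    (hS : Sᵀ * symp N * S = symp N)
    (hD : Vσ = Sᵀ * bdiag N (fun k => ν k • (1 : Matrix (Fin 2) (Fin 2) ℝ)) * S)
    (Z : Matrix (Fin N × Fin 2) (Fin N × Fin 2) ℝ)
    (hZ : Z = bdiag N fun k => Real.sqrt ((ν k) ^ 2 - 1) • !![1, 0; 0, -1]) :
    (cm (fromBlocks Vσ (Sᵀ * Z * S) (Sᵀ * Z * S) Vσ)
        + Complex.I • cm (fromBlocks (symp N) 0 0 (symp N))).PosSemidef := by
  -- real scalars
  set z : Fin N → ℝ := fun k => Real.sqrt ((ν k) ^ 2 - 1) with hzdef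
  have hν0 : ∀ k, 0 < ν k := fun k => lt_trans one_pos (hν k)
  have hz0 : ∀ k, 0 ≤ z k := fun k => Real.sqrt_nonneg _
  have hz2 : ∀ k, z k ^ 2 = ν k ^ 2 - 1 := fun k =>
    Real.sq_sqrt (by nlinarith [hν k])
  have hzν : ∀ k, z k ≤ ν k := by
    intro k
    nlinarith [hz2 k, hz0 k, hν0 k]
  set p : Fin N → ℝ := fun k => Real.sqrt ((ν k + z k) / 2) with hpdef
  set q : Fin N → ℝ := fun k => Real.sqrt ((ν k - z k) / 2) with hqdef
  have hp2 : ∀ k, p k * p k = (ν k + z k) / 2 := fun k =>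
    Real.mul_self_sqrt (by nlinarith [hz0 k, hν0 k])
  have hq2 : ∀ k, q k * q k = (ν k - z k) / 2 := fun k =>
    Real.mul_self_sqrt (by nlinarith [hzν k])
  have hpq : ∀ k, p k * q k = 1 / 2 := by
    intro k
    rw [hpdef, hqdef]
    simp only
    rw [← Real.sqrt_mul (by nlinarith [hz0 k, hν0 k])]
    rw [show (ν k + z k) / 2 * ((ν k - z k) / 2) = (1/2)^2 by nlinarith [hz2 k]]
    exact Real.sqrt_sq (by norm_num)
  -- complex versions
  have hp2C : ∀ k, (p k : ℂ) * p k = ((ν k : ℂ) + z k) / 2 := by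
    intro k; exact_mod_cast congrArg Complex.ofReal (hp2 k)
  have hq2C : ∀ k, (q k : ℂ) * q k = ((ν k : ℂ) - z k) / 2 := by
    intro k; exact_mod_cast congrArg Complex.ofReal (hq2 k)
  have hpqC : ∀ k, (p k : ℂ) * q k = 1 / 2 := by
    intro k
    have := congrArg (Complex.ofReal) (hpq k)
    push_cast at this
    exact this
  -- the factor C
  set c1 : Fin N → Matrix (Fin 2) (Fin 2) ℂ :=
    fun k => !![(p k : ℂ), Complex.I * q k; 0, 0] with hc1
  set c3 : Fin N → Matrix (Fin 2) (Fin 2) ℂ :=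
    fun k => !![(q k : ℂ), Complex.I * p k; 0, 0] with hc3
  set c4 : Fin N → Matrix (Fin 2) (Fin 2) ℂ :=
    fun k => !![-(q k : ℂ), -(Complex.I * p k); 0, 0] with hc4
  set C : Matrix ((Fin N × Fin 2) ⊕ (Fin N × Fin 2)) ((Fin N × Fin 2) ⊕ (Fin N × Fin 2)) ℂ :=
    fromBlocks (CB N c1) (CB N c1) (CB N c3) (CB N c4) with hC
  set Dm : Matrix (Fin N × Fin 2) (Fin N × Fin 2) ℝ :=
    bdiag N (fun k => ν k • (1 : Matrix (Fin 2) (Fin 2) ℝ)) with hDm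
  -- step A : Cᴴ * C equals the middle matrix
  have hA : Cᴴ * C = cm (fromBlocks Dm Z Z Dm)
      + Complex.I • cm (fromBlocks (symp N) 0 0 (symp N)) := by
    rw [hC, fromBlocks_conjTranspose, fromBlocks_multiply,
      cm_fromBlocks, cm_fromBlocks, fromBlocks_smul, fromBlocks_add]
    simp only [CB_conjTranspose, CB_mul, CB_add, hDm, hZ, cm_bdiag, symp_eq_bdiag,
      cm_zero, smul_zero, add_zero, CB_smul]
    rw [Matrix.fromBlocks_inj]
    refine ⟨?_, ?_, ?_, ?_⟩ <;>
      (apply CB_congr; intro k;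
       ext i j; fin_cases i <;> fin_cases j <;>
       simp [hc1, hc3, hc4, cm, Matrix.mul_apply, Fin.sum_univ_two,
         Matrix.conjTranspose_apply, Complex.conj_ofReal, _root_.map_mul, Complex.conj_I,
         Matrix.one_apply, Matrix.smul_apply])
    all_goals
      first
        | ring1
        | linear_combination hp2C k + hq2C k
        | linear_combination hp2C k - hq2C k
        | linear_combination 2 * Complex.I * (hpqC k)
        | linear_combination (-2) * Complex.I * (hpqC k)
        | linear_combination hp2C k + hq2C k
            - ((p k : ℂ) * (p k) + (q k : ℂ) * (q k)) * Complex.I_mul_I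
        | linear_combination - hp2C k + hq2C k
            + ((p k : ℂ) * (p k) - (q k : ℂ) * (q k)) * Complex.I_mul_I
  set T : Matrix ((Fin N × Fin 2) ⊕ (Fin N × Fin 2)) ((Fin N × Fin 2) ⊕ (Fin N × Fin 2)) ℝ :=
    fromBlocks S 0 0 S with hT
  have hTF : Tᵀ * fromBlocks Dm Z Z Dm * T =
      fromBlocks Vσ (Sᵀ * Z * S) (Sᵀ * Z * S) Vσ := by
    rw [hT, fromBlocks_transpose, Matrix.transpose_zero, fromBlocks_multiply,
      fromBlocks_multiply]
    simp [hD]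
  have hTG : Tᵀ * fromBlocks (symp N) 0 0 (symp N) * T =
      fromBlocks (symp N) 0 0 (symp N) := by
    rw [hT, fromBlocks_transpose, Matrix.transpose_zero, fromBlocks_multiply,
      fromBlocks_multiply]
    simp [hS]
  have key : cm (fromBlocks Vσ (Sᵀ * Z * S) (Sᵀ * Z * S) Vσ)
      + Complex.I • cm (fromBlocks (symp N) 0 0 (symp N))
      = (cm T)ᴴ * (Cᴴ * C) * cm T := by
    rw [hA, cm_conjTranspose, mul_add, add_mul, Matrix.mul_smul, Matrix.smul_mul,
      ← cm_mul, ← cm_mul, ← cm_mul, ← cm_mul, hTF, hTG]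
  rw [key]
  exact (Matrix.posSemidef_conjTranspose_mul_self C).conjTranspose_mul_mul_same (cm T)
end
end

section
/- If ρ = Σ_i p_i ρ_A^i ⊗ ρ_B^i is a separable bipartite density matrix on C^d ⊗ C^d with full-rank marginal σ = tr_A[ρ] = Σ_i p_i ρ_B^i, then the channel T associated to ρ by the state-channel duality has Heisenberg picture T*(A) = Σ_i tr[ρ_A^i A] F_i, where F_i = p_i σ^{-1/2} (ρ_B^i)^T σ^{-1/2}. The operators F_i satisfy 0 ≤ F_i ≤ I and Σ_i F_i = I, i.e., {F_i} is a POVM and T is entanglement breaking. -/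
/-!
Conjugating `F i` by `σ^{1/2}` cancels the two factors `σ^{-1/2}`, so the duality relation
reduces to `tr_A[(X ⊗ Y)(A ⊗ I)] = tr[X A] • Y`. Each `F i` is a congruence of the positive
matrix `(ρB i)ᵀ` scaled by `p i ≥ 0`, and `Σ F i = σ^{-1/2} σᵀ σ^{-1/2} = I` because `σ` is
diagonal; as the other effects are positive, `F i ≤ Σ_j F j = I`.
-/

open Matrix BigOperators Kronecker ComplexOrder

noncomputable section

/-- The density matrix σ = Σ_n s_n |n⟩⟨n|, diagonal in its eigenbasis. -/
def sigmaM (d : ℕ) (s : Fin d → ℝ) : Matrix (Fin d) (Fin d) ℂ :=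
  Matrix.diagonal fun n => (s n : ℂ)

/-- σ^{1/2}. -/
def sqrtSigma (d : ℕ) (s : Fin d → ℝ) : Matrix (Fin d) (Fin d) ℂ :=
  Matrix.diagonal fun n => (Real.sqrt (s n) : ℂ)

/-- σ^{-1/2}. -/
def invSqrtSigma (d : ℕ) (s : Fin d → ℝ) : Matrix (Fin d) (Fin d) ℂ :=
  Matrix.diagonal fun n => ((Real.sqrt (s n))⁻¹ : ℂ)

/-- The partial trace over the first (Alice's) tensor factor. -/
def ptraceA (d : ℕ) (ρ : Matrix (Fin d × Fin d) (Fin d × Fin d) ℂ) :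
    Matrix (Fin d) (Fin d) ℂ :=
  Matrix.of fun m m' => ∑ n, ρ (n, m) (n, m')

open scoped MatrixOrder in
theorem Matrix.posSemidef_one_sub_of_sum_eq_one {ι n 𝕜 : Type*} [Fintype ι] [Fintype n]
    [DecidableEq n] [RCLike 𝕜] {F : ι → Matrix n n 𝕜} (hF : ∀ i, (F i).PosSemidef)
    (hsum : ∑ i, F i = 1) (i : ι) : (1 - F i).PosSemidef :=
  hsum ▸ Finset.single_le_sum (fun j _ => (hF j).nonneg) (Finset.mem_univ i)

section Sigma

variable {d : ℕ} {s : Fin d → ℝ}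

theorem sigmaM_transpose : (sigmaM d s)ᵀ = sigmaM d s :=
  diagonal_transpose _

theorem invSqrtSigma_conjTranspose : (invSqrtSigma d s)ᴴ = invSqrtSigma d s := by
  simp [invSqrtSigma, diagonal_conjTranspose, Pi.star_def]

variable (hs : ∀ n, 0 < s n)
include hs

theorem sqrtSigma_mul_invSqrtSigma : sqrtSigma d s * invSqrtSigma d s = 1 := by
  rw [sqrtSigma, invSqrtSigma, diagonal_mul_diagonal, ← diagonal_one]
  congr with n
  exact mul_inv_cancel₀ (by exact_mod_cast (Real.sqrt_pos.mpr (hs n)).ne')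

theorem invSqrtSigma_mul_sqrtSigma : invSqrtSigma d s * sqrtSigma d s = 1 := by
  rw [sqrtSigma, invSqrtSigma, diagonal_mul_diagonal, ← diagonal_one]
  congr with n
  exact inv_mul_cancel₀ (by exact_mod_cast (Real.sqrt_pos.mpr (hs n)).ne')

theorem invSqrtSigma_mul_sigmaM_mul_invSqrtSigma :
    invSqrtSigma d s * sigmaM d s * invSqrtSigma d s = 1 := by
  rw [invSqrtSigma, sigmaM, diagonal_mul_diagonal, diagonal_mul_diagonal, ← diagonal_one]
  congr with n
  have hsqrt : (Real.sqrt (s n) : ℂ) ≠ 0 := by exact_mod_cast (Real.sqrt_pos.mpr (hs n)).ne'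
  have hsq : (s n : ℂ) = Real.sqrt (s n) * Real.sqrt (s n) := by
    exact_mod_cast (Real.mul_self_sqrt (hs n).le).symm
  rw [hsq]
  field_simp

theorem sqrtSigma_mul_conj_invSqrtSigma_mul_sqrtSigma (M : Matrix (Fin d) (Fin d) ℂ) :
    sqrtSigma d s * (invSqrtSigma d s * M * invSqrtSigma d s) * sqrtSigma d s = M := by
  rw [← Matrix.mul_assoc, ← Matrix.mul_assoc, sqrtSigma_mul_invSqrtSigma hs, Matrix.one_mul,
    Matrix.mul_assoc, invSqrtSigma_mul_sqrtSigma hs, Matrix.mul_one]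

end Sigma

section PartialTrace

variable {d : ℕ}

theorem ptraceA_sum {ι : Type*} (t : Finset ι)
    (f : ι → Matrix (Fin d × Fin d) (Fin d × Fin d) ℂ) :
    ptraceA d (∑ i ∈ t, f i) = ∑ i ∈ t, ptraceA d (f i) := by
  ext m m'
  simp only [ptraceA, of_apply, Matrix.sum_apply]
  exact Finset.sum_comm

theorem ptraceA_smul (c : ℂ) (M : Matrix (Fin d × Fin d) (Fin d × Fin d) ℂ) :
    ptraceA d (c • M) = c • ptraceA d M := by
  ext m m'
  simp [ptraceA, Finset.mul_sum]

theorem ptraceA_kronecker (X Y : Matrix (Fin d) (Fin d) ℂ) :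
    ptraceA d (X ⊗ₖ Y) = X.trace • Y := by
  ext m m'
  simp [ptraceA, trace, Finset.sum_mul]

theorem ptraceA_sum_smul_kronecker_mul_kronecker_one {ι : Type*} [Fintype ι] (c : ι → ℂ)
    (X Y : ι → Matrix (Fin d) (Fin d) ℂ) (A : Matrix (Fin d) (Fin d) ℂ) :
    ptraceA d ((∑ i, c i • (X i ⊗ₖ Y i)) * (A ⊗ₖ (1 : Matrix (Fin d) (Fin d) ℂ)))
      = ∑ i, (c i * (X i * A).trace) • Y i := by
  simp only [Finset.sum_mul, Matrix.smul_mul, ← mul_kronecker_mul, Matrix.mul_one, ptraceA_sum,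
    ptraceA_smul, ptraceA_kronecker, smul_smul]

end PartialTrace

theorem stmt18_general (d k : ℕ) (s : Fin d → ℝ) (hs : ∀ n, 0 < s n)
    (p : Fin k → ℝ) (hp : ∀ i, 0 ≤ p i)
    (ρA ρB : Fin k → Matrix (Fin d) (Fin d) ℂ)
    (hB : ∀ i, (ρB i).PosSemidef ∧ (ρB i).trace = 1)
    (ρ : Matrix (Fin d × Fin d) (Fin d × Fin d) ℂ)
    (hρ : ρ = ∑ i, ((p i : ℝ) : ℂ) • (ρA i ⊗ₖ ρB i))
    (hσ : ∑ i, ((p i : ℝ) : ℂ) • ρB i = sigmaM d s)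
    (F : Fin k → Matrix (Fin d) (Fin d) ℂ)
    (hF : ∀ i, F i = ((p i : ℝ) : ℂ) • (invSqrtSigma d s * (ρB i)ᵀ * invSqrtSigma d s)) :
    (∀ A : Matrix (Fin d) (Fin d) ℂ,
      sqrtSigma d s * (∑ i, ((ρA i * A).trace) • F i) * sqrtSigma d s
        = (ptraceA d (ρ * (A ⊗ₖ (1 : Matrix (Fin d) (Fin d) ℂ))))ᵀ) ∧
    (∀ i, (F i).PosSemidef ∧ ((1 : Matrix (Fin d) (Fin d) ℂ) - F i).PosSemidef) ∧
    (∑ i, F i = 1) := by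
  have hF_psd (i : Fin k) : (F i).PosSemidef := by
    have := (hB i).1.transpose.mul_mul_conjTranspose_same (invSqrtSigma d s)
    rw [invSqrtSigma_conjTranspose] at this
    exact hF i ▸ this.smul (Complex.zero_le_real.mpr (hp i))
  have hF_sum : ∑ i, F i = 1 := calc
    ∑ i, F i = invSqrtSigma d s * (∑ i, ((p i : ℝ) : ℂ) • ρB i)ᵀ * invSqrtSigma d s := by
      simp only [hF, transpose_sum, transpose_smul, Finset.mul_sum, Finset.sum_mul,
        Matrix.mul_smul, Matrix.smul_mul]
    _ = 1 := by rw [hσ, sigmaM_transpose, invSqrtSigma_mul_sigmaM_mul_invSqrtSigma hs]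
  refine ⟨fun A => ?_, fun i => ⟨hF_psd i, posSemidef_one_sub_of_sum_eq_one hF_psd hF_sum i⟩,
    hF_sum⟩
  rw [hρ, ptraceA_sum_smul_kronecker_mul_kronecker_one, transpose_sum, Finset.mul_sum,
    Finset.sum_mul]
  refine Finset.sum_congr rfl fun i _ => ?_
  rw [Matrix.mul_smul, Matrix.smul_mul, hF, Matrix.mul_smul, Matrix.smul_mul,
    sqrtSigma_mul_conj_invSqrtSigma_mul_sqrtSigma hs, transpose_smul, smul_smul, mul_comm]

/-- For a separable state ρ = Σ_i p_i ρ_A^i ⊗ ρ_B^i with full-rank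
marginal σ = Σ_i p_i ρ_B^i (diagonal with entries s_n > 0), the dual channel
T*(A) = Σ_i tr[ρ_A^i A] F_i with F_i = p_i σ^{-1/2}(ρ_B^i)ᵀσ^{-1/2} satisfies the duality
relation σ^{1/2}T*(A)σ^{1/2} = tr_A[ρ(A⊗I)]ᵀ, and {F_i} is a POVM: 0 ≤ F_i ≤ I and
Σ_i F_i = I (so T is entanglement breaking). -/
theorem stmt18 (d k : ℕ) (s : Fin d → ℝ) (hs : ∀ n, 0 < s n) (hsum : ∑ n, s n = 1)
    (p : Fin k → ℝ) (hp : ∀ i, 0 ≤ p i) (hpsum : ∑ i, p i = 1)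
    (ρA ρB : Fin k → Matrix (Fin d) (Fin d) ℂ)
    (hA : ∀ i, (ρA i).PosSemidef ∧ (ρA i).trace = 1)
    (hB : ∀ i, (ρB i).PosSemidef ∧ (ρB i).trace = 1)
    (ρ : Matrix (Fin d × Fin d) (Fin d × Fin d) ℂ)
    (hρ : ρ = ∑ i, ((p i : ℝ) : ℂ) • (ρA i ⊗ₖ ρB i))
    (hσ : ∑ i, ((p i : ℝ) : ℂ) • ρB i = sigmaM d s)
    (F : Fin k → Matrix (Fin d) (Fin d) ℂ)
    (hF : ∀ i, F i = ((p i : ℝ) : ℂ) • (invSqrtSigma d s * (ρB i)ᵀ * invSqrtSigma d s)) :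
    (∀ A : Matrix (Fin d) (Fin d) ℂ,
      sqrtSigma d s * (∑ i, ((ρA i * A).trace) • F i) * sqrtSigma d s
        = (ptraceA d (ρ * (A ⊗ₖ (1 : Matrix (Fin d) (Fin d) ℂ))))ᵀ) ∧
    (∀ i, (F i).PosSemidef ∧ ((1 : Matrix (Fin d) (Fin d) ℂ) - F i).PosSemidef) ∧
    (∑ i, F i = 1) :=
  stmt18_general d k s hs p hp ρA ρB hB ρ hρ hσ F hF
end
end
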